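/- arXiv:2309.13416 — 4 statements merged into one kernel-verified Lean document; each statement's English description precedes it below -/
import Mathlib

section
/- For the PPDG iterates, for every k ≥ 1 one has L(x^{k+1}, y^{k+1}) ≤ L(x^k, y^k) - (1/α - L/2)‖x^{k+1} - x^k‖² + ⟨y^{k+1} - y^k, α A(∇f(x^{k-1}) - ∇f(x^k))⟩. -/
/-!
The primal update is a gradient step on `L(·, y^k)`, whose gradient `∇f + Aᵀ y^k` is again
`L`-Lipschitz, so the descent lemma lowers `L(·, y^k)` by `(1/α - L/2)‖x^{k+1} - x^k‖²`.
The dual update is a proximal step; its optimality condition says that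
`A(2x^k - x^{k-1}) - M(y^k - y^{k-1})` is a subgradient of `h*` at `y^k`, and testing it
against `y^{k+1}` bounds `h*(y^k) - h*(y^{k+1})`. The bilinear terms then collapse because the
two primal updates give `x^{k+1} - (2x^k - x^{k-1}) + α Aᵀ(y^k - y^{k-1}) = α(∇f(x^{k-1}) - ∇f(x^k))`.
-/

open RealInnerProductSpace Set Filter Topology

section DescentLemma

variable {X : Type*} [NormedAddCommGroup X] [InnerProductSpace ℝ X] [CompleteSpace X]
  {f : X → ℝ} {f' : X → X} {L : ℝ}

theorem le_add_inner_add_sq_of_lipschitz_gradient (hf : ∀ p, HasGradientAt f (f' p) p)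
    (hLip : ∀ p q, ‖f' p - f' q‖ ≤ L * ‖p - q‖) (p q : X) :
    f q ≤ f p + ⟪f' p, q - p⟫ + L / 2 * ‖q - p‖ ^ 2 := by
  set d := q - p
  have hline : ∀ t : ℝ, HasDerivAt (fun t : ℝ => f (p + t • d)) ⟪f' (p + t • d), d⟫ t := by
    intro t
    have hseg : HasDerivAt (fun t : ℝ => p + t • d) d t := by
      simpa using ((hasDerivAt_id t).smul_const d).const_add p
    simpa [Function.comp_def] using (hf (p + t • d)).hasFDerivAt.comp_hasDerivAt t hseg
  have hbound : ∀ t : ℝ, HasDerivAt (fun t : ℝ => f p + t * ⟪f' p, d⟫ + L / 2 * t ^ 2 * ‖d‖ ^ 2)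
      (⟪f' p, d⟫ + L * t * ‖d‖ ^ 2) t := by
    intro t
    refine ((((hasDerivAt_id t).mul_const ⟪f' p, d⟫).const_add (f p)).fun_add
      (((hasDerivAt_pow 2 t).const_mul (L / 2)).mul_const (‖d‖ ^ 2))).congr_deriv ?_
    simp only [Nat.cast_ofNat, Nat.add_one_sub_one, pow_one]; ring
  have hslope : ∀ t ∈ Ico (0 : ℝ) 1, ⟪f' (p + t • d), d⟫ ≤ ⟪f' p, d⟫ + L * t * ‖d‖ ^ 2 := by
    rintro t ⟨ht, -⟩
    have : ⟪f' (p + t • d) - f' p, d⟫ ≤ L * t * ‖d‖ ^ 2 :=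
      calc ⟪f' (p + t • d) - f' p, d⟫ ≤ ‖f' (p + t • d) - f' p‖ * ‖d‖ := real_inner_le_norm _ _
        _ ≤ L * ‖p + t • d - p‖ * ‖d‖ := by gcongr; exact hLip _ _
        _ = L * t * ‖d‖ ^ 2 := by
          rw [add_sub_cancel_left, norm_smul, Real.norm_of_nonneg ht]; ring
    rwa [inner_sub_left, sub_le_iff_le_add'] at this
  have := image_le_of_deriv_right_le_deriv_boundary
    (fun t _ => (hline t).continuousAt.continuousWithinAt)
    (fun t _ => (hline t).hasDerivWithinAt) (by simp)
    (fun t _ => (hbound t).continuousAt.continuousWithinAt)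
    (fun t _ => (hbound t).hasDerivWithinAt) hslope (right_mem_Icc.2 zero_le_one)
  simpa [d] using this

theorem le_sub_mul_sq_of_gradient_step (hf : ∀ p, HasGradientAt f (f' p) p)
    (hLip : ∀ p q, ‖f' p - f' q‖ ≤ L * ‖p - q‖) {α : ℝ} (hα : α ≠ 0) {p q : X}
    (hq : q = p - α • f' p) : f q ≤ f p - (1 / α - L / 2) * ‖q - p‖ ^ 2 := by
  have hstep : f' p = -α⁻¹ • (q - p) := by
    rw [hq, sub_sub_cancel_left, smul_neg, neg_smul, neg_neg, inv_smul_smul₀ hα]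
  have := le_add_inner_add_sq_of_lipschitz_gradient hf hLip p q
  rw [hstep, real_inner_smul_left, real_inner_self_eq_norm_sq] at this
  calc f q ≤ f p + -α⁻¹ * ‖q - p‖ ^ 2 + L / 2 * ‖q - p‖ ^ 2 := this
    _ = f p - (1 / α - L / 2) * ‖q - p‖ ^ 2 := by ring

end DescentLemma

theorem ConvexOn.sub_le_of_isMinOn_add {E : Type*} [AddCommGroup E] [Module ℝ E]
    [TopologicalSpace E] {K : Set E} {g ψ : E → ℝ} (hg : ConvexOn ℝ K g) {b d : E}
    (hb : b ∈ K) (hbd : b + d ∈ K) (hmin : IsMinOn (g + ψ) K b) {s : ℝ}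
    (hψ : HasLineDerivAt ℝ ψ s b d) : g b - s ≤ g (b + d) := by
  -- Minimality and convexity along the chord bound the difference quotients of `ψ`; let `t → 0⁺`.
  have hchord : ∀ t ∈ Ioo (0 : ℝ) 1, g b - g (b + d) ≤ t⁻¹ • (ψ (b + t • d) - ψ b) := by
    rintro t ⟨ht₀, ht₁⟩
    have hseg : (1 - t) • b + t • (b + d) = b + t • d := by module
    have hconv := hg.2 hb hbd (sub_nonneg.2 ht₁.le) ht₀.le (sub_add_cancel 1 t)
    have hmin' : (g + ψ) b ≤ (g + ψ) (b + t • d) :=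
      hmin (hseg ▸ hg.1 hb hbd (sub_nonneg.2 ht₁.le) ht₀.le (sub_add_cancel 1 t))
    rw [hseg, smul_eq_mul, smul_eq_mul] at hconv
    rw [Pi.add_apply, Pi.add_apply] at hmin'
    rw [smul_eq_mul, le_inv_mul_iff₀ ht₀]
    linarith
  have := ge_of_tendsto hψ.tendsto_slope_zero_right
    (eventually_of_mem (Ioo_mem_nhdsGT zero_lt_one) hchord)
  linarith

theorem hasLineDerivAt_prox_quadratic {Y : Type*} [NormedAddCommGroup Y] [InnerProductSpace ℝ Y]
    {M : Y →ₗ[ℝ] Y} (hM : M.IsSymmetric) (u y₀ b d : Y) :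
    HasLineDerivAt ℝ (fun w => -⟪w, u⟫ + 1 / 2 * ⟪M (w - y₀), w - y₀⟫)
      (-⟪d, u - M (b - y₀)⟫) b d := by
  set e := b - y₀
  have hpoly : (fun t : ℝ => -⟪b + t • d, u⟫ + 1 / 2 * ⟪M (b + t • d - y₀), b + t • d - y₀⟫) =
      fun t => (-⟪b, u⟫ + 1 / 2 * ⟪M e, e⟫) + t * (-⟪d, u - M e⟫) + t ^ 2 * (1 / 2 * ⟪M d, d⟫) := by
    funext t
    have hsymm : ⟪M d, e⟫ = ⟪M e, d⟫ := by rw [hM, real_inner_comm]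
    rw [show b + t • d - y₀ = e + t • d by simp only [e]; abel]
    simp only [map_add, map_smul, inner_add_left, inner_add_right, real_inner_smul_left,
      real_inner_smul_right, inner_sub_right, hsymm, real_inner_comm (M e) d]
    ring
  unfold HasLineDerivAt
  rw [hpoly]
  refine (((hasDerivAt_id (0 : ℝ)).mul_const _).const_add _).fun_add
    (((hasDerivAt_pow 2 (0 : ℝ)).mul_const _)) |>.congr_deriv ?_
  simp

theorem ConvexOn.add_inner_le_of_isMinOn_prox {Y : Type*} [NormedAddCommGroup Y]
    [InnerProductSpace ℝ Y] {g : Y → ℝ} (hg : ConvexOn ℝ univ g) {M : Y →ₗ[ℝ] Y}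
    (hM : M.IsSymmetric) {u y₀ b : Y}
    (hmin : IsMinOn (fun w => g w - ⟪w, u⟫ + 1 / 2 * ⟪M (w - y₀), w - y₀⟫) univ b) (w : Y) :
    g b + ⟪w - b, u - M (b - y₀)⟫ ≤ g w := by
  have hmin' : IsMinOn (g + fun w => -⟪w, u⟫ + 1 / 2 * ⟪M (w - y₀), w - y₀⟫) univ b := by
    refine isMinOn_iff.2 fun w hw => ?_
    have := isMinOn_iff.1 hmin w hw
    simp only [Pi.add_apply] at this ⊢
    linarith
  simpa [sub_neg_eq_add] using
    hg.sub_le_of_isMinOn_add (mem_univ b) (mem_univ _) hmin'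
      (hasLineDerivAt_prox_quadratic hM u y₀ b (w - b))

theorem hasGradientAt_add_inner_apply {X Y : Type*} [NormedAddCommGroup X] [InnerProductSpace ℝ X]
    [CompleteSpace X] [NormedAddCommGroup Y] [InnerProductSpace ℝ Y] [CompleteSpace Y]
    {f : X → ℝ} {f'p p : X} (hf : HasGradientAt f f'p p) (A : X →L[ℝ] Y) (y : Y) :
    HasGradientAt (fun p => f p + ⟪y, A p⟫) (f'p + ContinuousLinearMap.adjoint A y) p := by
  rw [hasGradientAt_iff_hasFDerivAt, map_add]
  refine hf.hasFDerivAt.add ?_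
  refine (InnerProductSpace.toDual ℝ X (ContinuousLinearMap.adjoint A y)).hasFDerivAt
    |>.congr_of_eventuallyEq (Eventually.of_forall fun q => ?_)
  simp [ContinuousLinearMap.adjoint_inner_left]

theorem stmt1_general
    {X : Type*} [NormedAddCommGroup X] [InnerProductSpace ℝ X] [FiniteDimensional ℝ X]
    {Y : Type*} [NormedAddCommGroup Y] [InnerProductSpace ℝ Y] [FiniteDimensional ℝ Y]
    (A : X →L[ℝ] Y)
    (f : X → ℝ) (f' : X → X) (hf : ∀ p, HasGradientAt f (f' p) p)
    (Lf : ℝ) (hLip : ∀ p q, ‖f' p - f' q‖ ≤ Lf * ‖p - q‖)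
    (hs : Y → ℝ) (hconv : ConvexOn ℝ Set.univ hs)
    (α : ℝ) (hα : 0 < α)
    (x : ℕ → X) (y : ℕ → Y)
    (hxiter : ∀ k : ℕ,
      x (k+1) = x k - α • (f' (x k) + (ContinuousLinearMap.adjoint A) (y k)))
    (hyiter : ∀ k : ℕ, ∀ w : Y,
      hs (y (k+1)) - ⟪y (k+1), A ((2:ℝ) • x (k+1) - x k)⟫
        + (1/2) * ⟪α • A ((ContinuousLinearMap.adjoint A) (y (k+1) - y k)), y (k+1) - y k⟫
      ≤ hs w - ⟪w, A ((2:ℝ) • x (k+1) - x k)⟫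
        + (1/2) * ⟪α • A ((ContinuousLinearMap.adjoint A) (w - y k)), w - y k⟫) :
    ∀ k : ℕ, 1 ≤ k →
      f (x (k+1)) + ⟪y (k+1), A (x (k+1))⟫ - hs (y (k+1))
        ≤ (f (x k) + ⟪y k, A (x k)⟫ - hs (y k))
          - (1/α - Lf/2) * ‖x (k+1) - x k‖^2
          + ⟪y (k+1) - y k, α • A (f' (x (k-1)) - f' (x k))⟫ := by
  rintro k hk
  obtain ⟨m, rfl⟩ := Nat.exists_eq_add_of_le' hk
  rw [Nat.add_sub_cancel]
  set A' := ContinuousLinearMap.adjoint A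
  set c := (2 : ℝ) • x (m + 1) - x m
  set d := y (m + 1 + 1) - y (m + 1)
  have hprimal : f (x (m + 1 + 1)) + ⟪y (m + 1), A (x (m + 1 + 1))⟫ ≤
      f (x (m + 1)) + ⟪y (m + 1), A (x (m + 1))⟫
        - (1 / α - Lf / 2) * ‖x (m + 1 + 1) - x (m + 1)‖ ^ 2 :=
    le_sub_mul_sq_of_gradient_step (fun p => hasGradientAt_add_inner_apply (hf p) A (y (m + 1)))
      (fun p q => by simpa only [add_sub_add_right_eq_sub] using hLip p q) hα.ne' (hxiter (m + 1))
  have hdual : hs (y (m + 1)) + (⟪d, A c⟫ - ⟪d, α • A (A' (y (m + 1) - y m))⟫) ≤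
      hs (y (m + 1 + 1)) := by
    rw [← inner_sub_right]
    exact hconv.add_inner_le_of_isMinOn_prox
      (((ContinuousLinearMap.isPositive_self_comp_adjoint A).isSymmetric).smul (c := α) rfl)
      (isMinOn_iff.2 fun w _ => hyiter m w) (y (m + 1 + 1))
  have hcross : x (m + 1 + 1) - c + α • A' (y (m + 1) - y m) =
      α • (f' (x m) - f' (x (m + 1))) := by
    rw [map_sub]
    linear_combination (norm := module) hxiter (m + 1) - hxiter m
  have hinner : ⟪d, A (x (m + 1 + 1))⟫ - ⟪d, A c⟫ + ⟪d, α • A (A' (y (m + 1) - y m))⟫ =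
      ⟪d, α • A (f' (x m) - f' (x (m + 1)))⟫ := by
    simpa only [map_add, map_sub, map_smul, inner_add_right, inner_sub_right]
      using congrArg (fun v => ⟪d, A v⟫) hcross
  have hsplit : ⟪d, A (x (m + 1 + 1))⟫ =
      ⟪y (m + 1 + 1), A (x (m + 1 + 1))⟫ - ⟪y (m + 1), A (x (m + 1 + 1))⟫ :=
    inner_sub_left _ _ _
  linarith

/-- descent-type recursion for the Lagrangian along PPDG iterates. -/
theorem stmt1
    {X : Type*} [NormedAddCommGroup X] [InnerProductSpace ℝ X] [FiniteDimensional ℝ X]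
    {Y : Type*} [NormedAddCommGroup Y] [InnerProductSpace ℝ Y] [FiniteDimensional ℝ Y]
    (A : X →L[ℝ] Y) (hA : Function.Surjective A)
    (f : X → ℝ) (f' : X → X) (hf : ∀ p, HasGradientAt f (f' p) p)
    (Lf : ℝ) (hLf : 0 < Lf) (hLip : ∀ p q, ‖f' p - f' q‖ ≤ Lf * ‖p - q‖)
    (hs : Y → ℝ) (hconv : ConvexOn ℝ Set.univ hs)
    (hbdd : ∀ w : Y, BddBelow (Set.range fun p : X => f p + ⟪w, A p⟫ - hs w))
    (α : ℝ) (hα : 0 < α)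
    (x : ℕ → X) (y : ℕ → Y)
    (hxiter : ∀ k : ℕ,
      x (k+1) = x k - α • (f' (x k) + (ContinuousLinearMap.adjoint A) (y k)))
    (hyiter : ∀ k : ℕ, ∀ w : Y,
      hs (y (k+1)) - ⟪y (k+1), A ((2:ℝ) • x (k+1) - x k)⟫
        + (1/2) * ⟪α • A ((ContinuousLinearMap.adjoint A) (y (k+1) - y k)), y (k+1) - y k⟫
      ≤ hs w - ⟪w, A ((2:ℝ) • x (k+1) - x k)⟫
        + (1/2) * ⟪α • A ((ContinuousLinearMap.adjoint A) (w - y k)), w - y k⟫) :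
    ∀ k : ℕ, 1 ≤ k →
      f (x (k+1)) + ⟪y (k+1), A (x (k+1))⟫ - hs (y (k+1))
        ≤ (f (x k) + ⟪y k, A (x k)⟫ - hs (y k))
          - (1/α - Lf/2) * ‖x (k+1) - x k‖^2
          + ⟪y (k+1) - y k, α • A (f' (x (k-1)) - f' (x k))⟫ :=
  stmt1_general A f f' hf Lf hLip hs hconv α hα x y hxiter hyiter
end

section
/- For the PPDG iterates, for every k ≥ 1 the vector g^k = -M(y^k - y^{k-1}) + A(2x^k - x^{k-1}) belongs to ∂h*(y^k), and the element d^k = (∇f(x^k) + A^T y^k - 2a(x^k - x^{k+1}) + 2b(x^k - x^{k-1}), A x^k - g^k, 2a(x^k - x^{k+1}), 2b(x^{k-1} - x^k)) of ∂𝓛(z^k) satisfies ‖d^k‖ ≤ γ₁‖x^k - x^{k-1}‖ + γ₂‖x^{k+1} - x^k‖, where γ₁ = 2L + 4b + 2/α + (2 + αL)‖A‖ and γ₂ = 4a + 1/α + ‖A‖. -/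
open RealInnerProductSpace

noncomputable section

/-- The convex subdifferential of a real-valued convex function. -/
def subdiff {Y : Type*} [NormedAddCommGroup Y] [InnerProductSpace ℝ Y]
    (φ : Y → ℝ) (q : Y) : Set Y :=
  {g : Y | ∀ w : Y, φ q + ⟪g, w - q⟫ ≤ φ w}

lemma helper_sub
    {X : Type*} [NormedAddCommGroup X] [InnerProductSpace ℝ X] [FiniteDimensional ℝ X]
    {Y : Type*} [NormedAddCommGroup Y] [InnerProductSpace ℝ Y] [FiniteDimensional ℝ Y]
    (A : X →L[ℝ] Y) (hs : Y → ℝ) (hconv : ConvexOn ℝ Set.univ hs)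
    (α : ℝ) (hα : 0 < α) (q y0 v : Y)
    (hmin : ∀ w : Y,
      hs q - ⟪q, v⟫ + (1/2) * ⟪α • A ((ContinuousLinearMap.adjoint A) (q - y0)), q - y0⟫
      ≤ hs w - ⟪w, v⟫ + (1/2) * ⟪α • A ((ContinuousLinearMap.adjoint A) (w - y0)), w - y0⟫) :
    -(α • A ((ContinuousLinearMap.adjoint A) (q - y0))) + v ∈ subdiff hs q := by
  intro w
  set B := ContinuousLinearMap.adjoint A with hB
  have key : ∀ u u' : Y, ⟪A (B u), u'⟫ = ⟪B u, B u'⟫ := by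
    intro u u'
    rw [real_inner_comm, ← ContinuousLinearMap.adjoint_inner_left A, real_inner_comm]
  set d := w - q with hd
  set e := q - y0 with he
  have hgoal_eq : ⟪-(α • A (B e)) + v, d⟫ = ⟪v, d⟫ - α * ⟪B e, B d⟫ := by
    rw [inner_add_left, inner_neg_left, real_inner_smul_left, key]
    ring
  rw [hgoal_eq]
  have hC : 0 ≤ α * ⟪B d, B d⟫ := mul_nonneg hα.le real_inner_self_nonneg
  have hstep : ∀ t : ℝ, 0 < t → t ≤ 1 →
      hs q + (⟪v, d⟫ - α * ⟪B e, B d⟫) ≤ hs w + t/2 * (α * ⟪B d, B d⟫) := by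
    intro t ht ht1
    have h1 := hmin (q + t • d)
    have hcv : hs (q + t • d) ≤ (1-t) * hs q + t * hs w := by
      have h2 := hconv.2 (Set.mem_univ q) (Set.mem_univ w)
        (by linarith : (0:ℝ) ≤ 1 - t) ht.le (by ring)
      have harg : (1-t) • q + t • w = q + t • d := by rw [hd]; module
      rwa [harg] at h2
    have harg2 : q + t • d - y0 = e + t • d := by rw [he]; module
    rw [harg2] at h1
    have hinner1 : ⟪q + t • d, v⟫ = ⟪q, v⟫ + t * ⟪v, d⟫ := by
      rw [inner_add_left, real_inner_smul_left, real_inner_comm d v]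
    have hqe : ⟪α • A (B e), e⟫ = α * ⟪B e, B e⟫ := by
      rw [real_inner_smul_left, key]
    have hexp : ⟪α • A (B (e + t • d)), e + t • d⟫
        = α * ⟪B e, B e⟫ + 2 * t * (α * ⟪B e, B d⟫) + t^2 * (α * ⟪B d, B d⟫) := by
      rw [real_inner_smul_left, map_add, map_smul, map_add, map_smul,
        inner_add_left, inner_add_right, inner_add_right,
        real_inner_smul_left, real_inner_smul_right, real_inner_smul_right,
        real_inner_smul_left, key, key, key, key, real_inner_comm (B d) (B e)]
      ring
    rw [hinner1, hqe, hexp] at h1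
    have h2 : t * (hs q + (⟪v, d⟫ - α * ⟪B e, B d⟫)) ≤ t * (hs w + t/2 * (α * ⟪B d, B d⟫)) := by
      nlinarith [h1, hcv]
    exact le_of_mul_le_mul_left h2 ht
  apply le_of_forall_pos_le_add
  intro ε hε
  set C := α * ⟪B d, B d⟫ with hCdef
  set t := min 1 (ε / (C+1)) with htdef
  have ht : 0 < t := lt_min one_pos (div_pos hε (by linarith))
  have hst := hstep t ht (min_le_left _ _)
  have htC : t/2 * C ≤ ε := by
    have h3 : t ≤ ε / (C+1) := min_le_right _ _
    have h4 : ε / (C+1) * C ≤ ε := by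
      rw [div_mul_eq_mul_div, div_le_iff₀ (by linarith)]
      nlinarith
    have h5 : t * C ≤ ε := le_trans (mul_le_mul_of_nonneg_right h3 hC) h4
    have h6 : t/2 * C ≤ t * C :=
      mul_le_mul_of_nonneg_right (by linarith) hC
    linarith
  linarith



set_option maxHeartbeats 1000000 in
/-- `g^k ∈ ∂h*(y^k)` and the subgradient `d^k ∈ ∂𝓛(z^k)` satisfies
`‖d^k‖ ≤ γ₁‖x^k - x^{k-1}‖ + γ₂‖x^{k+1} - x^k‖` (Euclidean norm of the 4-tuple). -/
theorem stmt3
    {X : Type*} [NormedAddCommGroup X] [InnerProductSpace ℝ X] [FiniteDimensional ℝ X]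
    {Y : Type*} [NormedAddCommGroup Y] [InnerProductSpace ℝ Y] [FiniteDimensional ℝ Y]
    (A : X →L[ℝ] Y) (hA : Function.Surjective A)
    (f : X → ℝ) (f' : X → X) (hf : ∀ p, HasGradientAt f (f' p) p)
    (Lf : ℝ) (hLf : 0 < Lf) (hLip : ∀ p q, ‖f' p - f' q‖ ≤ Lf * ‖p - q‖)
    (hs : Y → ℝ) (hconv : ConvexOn ℝ Set.univ hs)
    (hbdd : ∀ w : Y, BddBelow (Set.range fun p : X => f p + ⟪w, A p⟫ - hs w))
    (α : ℝ) (hα : 0 < α)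
    (x : ℕ → X) (y : ℕ → Y)
    (hxiter : ∀ k : ℕ,
      x (k+1) = x k - α • (f' (x k) + (ContinuousLinearMap.adjoint A) (y k)))
    (hyiter : ∀ k : ℕ, ∀ w : Y,
      hs (y (k+1)) - ⟪y (k+1), A ((2:ℝ) • x (k+1) - x k)⟫
        + (1/2) * ⟪α • A ((ContinuousLinearMap.adjoint A) (y (k+1) - y k)), y (k+1) - y k⟫
      ≤ hs w - ⟪w, A ((2:ℝ) • x (k+1) - x k)⟫
        + (1/2) * ⟪α • A ((ContinuousLinearMap.adjoint A) (w - y k)), w - y k⟫)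
    (δ a b c : ℝ) (hδ : 0 < δ)
    (hadef : a = δ / α)
    (hbdef : b = 1/(2*α) - Lf/4 - δ/α - α*δ*Lf^2/2 - δ*Lf + α*Lf^2/(4*δ))
    (hcdef : c = b - α*Lf^2/(2*δ))
    (hapos : 0 < a) (hbpos : 0 < b) (hcpos : 0 < c) :
    ∀ k : ℕ, 1 ≤ k →
      (-(α • A ((ContinuousLinearMap.adjoint A) (y k - y (k-1))))
          + A ((2:ℝ) • x k - x (k-1)) ∈ subdiff hs (y k))
      ∧ Real.sqrt
          (‖f' (x k) + (ContinuousLinearMap.adjoint A) (y k)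
              - (2*a) • (x k - x (k+1)) + (2*b) • (x k - x (k-1))‖^2
            + ‖A (x k) - (-(α • A ((ContinuousLinearMap.adjoint A) (y k - y (k-1))))
                + A ((2:ℝ) • x k - x (k-1)))‖^2
            + ‖(2*a) • (x k - x (k+1))‖^2
            + ‖(2*b) • (x (k-1) - x k)‖^2)
        ≤ (2*Lf + 4*b + 2/α + (2 + α*Lf) * ‖A‖) * ‖x k - x (k-1)‖
            + (4*a + 1/α + ‖A‖) * ‖x (k+1) - x k‖ := by
  
  intro k hk
  obtain ⟨m, rfl⟩ : ∃ m, k = m + 1 := ⟨k - 1, (Nat.succ_pred_eq_of_pos hk).symm⟩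
  simp only [Nat.add_sub_cancel]
  set B := ContinuousLinearMap.adjoint A with hB
  have hv : ∀ j, f' (x j) + B (y j) = α⁻¹ • (x j - x (j+1)) := by
    intro j
    have h2 : α • (f' (x j) + B (y j)) = x j - x (j+1) := by
      rw [hxiter j]; abel
    calc f' (x j) + B (y j) = α⁻¹ • (α • (f' (x j) + B (y j))) := by
          rw [smul_smul, inv_mul_cancel₀ hα.ne', one_smul]
      _ = α⁻¹ • (x j - x (j+1)) := by rw [h2]
  constructor
  · exact helper_sub A hs hconv α hα (y (m+1)) (y m) (A ((2:ℝ) • x (m+1) - x m))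
      (fun w => hyiter m w)
  · set P := ‖x (m+1) - x m‖ with hPdef
    set Q := ‖x (m+1+1) - x (m+1)‖ with hQdef
    have hP0 : 0 ≤ P := norm_nonneg _
    have hQ0 : 0 ≤ Q := norm_nonneg _
    have hQ' : ‖x (m+1) - x (m+1+1)‖ = Q := norm_sub_rev _ _
    have hP' : ‖x m - x (m+1)‖ = P := norm_sub_rev _ _
    have hAnn : 0 ≤ ‖A‖ := norm_nonneg _
    -- component 1
    have h1eq : f' (x (m+1)) + B (y (m+1)) - (2*a) • (x (m+1) - x (m+1+1))
          + (2*b) • (x (m+1) - x m)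
        = α⁻¹ • (x (m+1) - x (m+1+1)) - (2*a) • (x (m+1) - x (m+1+1))
          + (2*b) • (x (m+1) - x m) := by rw [hv (m+1)]
    have n1 : ‖α⁻¹ • (x (m+1) - x (m+1+1))‖ = 1/α * Q := by
      rw [norm_smul, Real.norm_eq_abs, abs_of_pos (inv_pos.2 hα), hQ', one_div]
    have n2 : ‖(2*a) • (x (m+1) - x (m+1+1))‖ = 2*a*Q := by
      rw [norm_smul, Real.norm_eq_abs, abs_of_pos (by linarith : (0:ℝ) < 2*a), hQ']
    have n3 : ‖(2*b) • (x (m+1) - x m)‖ = 2*b*P := by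
      rw [norm_smul, Real.norm_eq_abs, abs_of_pos (by linarith : (0:ℝ) < 2*b)]
    have n4 : ‖(2*b) • (x m - x (m+1))‖ = 2*b*P := by
      rw [norm_smul, Real.norm_eq_abs, abs_of_pos (by linarith : (0:ℝ) < 2*b), hP']
    have hs1 : ‖f' (x (m+1)) + B (y (m+1)) - (2*a) • (x (m+1) - x (m+1+1))
          + (2*b) • (x (m+1) - x m)‖ ≤ (1/α + 2*a) * Q + 2*b * P := by
      rw [h1eq]
      calc ‖α⁻¹ • (x (m+1) - x (m+1+1)) - (2*a) • (x (m+1) - x (m+1+1))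
            + (2*b) • (x (m+1) - x m)‖
          ≤ ‖α⁻¹ • (x (m+1) - x (m+1+1)) - (2*a) • (x (m+1) - x (m+1+1))‖
            + ‖(2*b) • (x (m+1) - x m)‖ := norm_add_le _ _
        _ ≤ ‖α⁻¹ • (x (m+1) - x (m+1+1))‖ + ‖(2*a) • (x (m+1) - x (m+1+1))‖
            + ‖(2*b) • (x (m+1) - x m)‖ := by
              have := norm_sub_le (α⁻¹ • (x (m+1) - x (m+1+1)))
                ((2*a) • (x (m+1) - x (m+1+1)))
              linarith
        _ = (1/α + 2*a) * Q + 2*b * P := by rw [n1, n2, n3]; ring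
    -- component 2
    have h2eq : A (x (m+1)) - (-(α • A (B (y (m+1) - y m))) + A ((2:ℝ) • x (m+1) - x m))
        = A (x (m+1) - x (m+1+1)) - α • A (f' (x (m+1)) - f' (x m)) := by
      have e1 : B (y (m+1)) = α⁻¹ • (x (m+1) - x (m+1+1)) - f' (x (m+1)) :=
        eq_sub_of_add_eq' (hv (m+1))
      have e2 : B (y m) = α⁻¹ • (x m - x (m+1)) - f' (x m) :=
        eq_sub_of_add_eq' (hv m)
      rw [map_sub B, e1, e2]
      simp only [map_sub, map_add, map_smul, smul_sub, smul_smul]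
      match_scalars
      all_goals try field_simp
      all_goals try ring
      all_goals norm_num
    have hs2 : ‖A (x (m+1)) - (-(α • A (B (y (m+1) - y m))) + A ((2:ℝ) • x (m+1) - x m))‖
        ≤ ‖A‖ * Q + α * Lf * ‖A‖ * P := by
      rw [h2eq]
      have t1 : ‖A (x (m+1) - x (m+1+1))‖ ≤ ‖A‖ * Q := by
        rw [← hQ']; exact A.le_opNorm _
      have t2 : ‖α • A (f' (x (m+1)) - f' (x m))‖ ≤ α * Lf * ‖A‖ * P := by
        rw [norm_smul, Real.norm_eq_abs, abs_of_pos hα]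
        have t3 : ‖A (f' (x (m+1)) - f' (x m))‖ ≤ ‖A‖ * (Lf * P) := by
          calc ‖A (f' (x (m+1)) - f' (x m))‖ ≤ ‖A‖ * ‖f' (x (m+1)) - f' (x m)‖ :=
                A.le_opNorm _
            _ ≤ ‖A‖ * (Lf * P) := by
                have := hLip (x (m+1)) (x m)
                exact mul_le_mul_of_nonneg_left this hAnn
        calc α * ‖A (f' (x (m+1)) - f' (x m))‖ ≤ α * (‖A‖ * (Lf * P)) :=
              mul_le_mul_of_nonneg_left t3 hα.le
          _ = α * Lf * ‖A‖ * P := by ring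
      calc ‖A (x (m+1) - x (m+1+1)) - α • A (f' (x (m+1)) - f' (x m))‖
          ≤ ‖A (x (m+1) - x (m+1+1))‖ + ‖α • A (f' (x (m+1)) - f' (x m))‖ :=
            norm_sub_le _ _
        _ ≤ ‖A‖ * Q + α * Lf * ‖A‖ * P := by linarith
    -- combine via sqrt
    set s1 := ‖f' (x (m+1)) + B (y (m+1)) - (2*a) • (x (m+1) - x (m+1+1))
        + (2*b) • (x (m+1) - x m)‖ with hs1def
    set s2 := ‖A (x (m+1)) - (-(α • A (B (y (m+1) - y m))) + A ((2:ℝ) • x (m+1) - x m))‖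
      with hs2def
    set s3 := ‖(2*a) • (x (m+1) - x (m+1+1))‖ with hs3def
    set s4 := ‖(2*b) • (x m - x (m+1))‖ with hs4def
    have h10 : 0 ≤ s1 := norm_nonneg _
    have h20 : 0 ≤ s2 := norm_nonneg _
    have h30 : 0 ≤ s3 := norm_nonneg _
    have h40 : 0 ≤ s4 := norm_nonneg _
    have hsq : Real.sqrt (s1^2 + s2^2 + s3^2 + s4^2) ≤ s1 + s2 + s3 + s4 := by
      have hle : s1^2 + s2^2 + s3^2 + s4^2 ≤ (s1 + s2 + s3 + s4)^2 := by nlinarith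
      calc Real.sqrt (s1^2 + s2^2 + s3^2 + s4^2)
          ≤ Real.sqrt ((s1 + s2 + s3 + s4)^2) := Real.sqrt_le_sqrt hle
        _ = s1 + s2 + s3 + s4 := Real.sqrt_sq (by positivity)
    have k1 : 0 ≤ ‖A‖ * P := mul_nonneg hAnn hP0
    have k2 : 0 ≤ Lf * P := mul_nonneg hLf.le hP0
    have k3 : 0 ≤ 1/α * P := mul_nonneg (by positivity) hP0
    calc Real.sqrt (s1^2 + s2^2 + s3^2 + s4^2) ≤ s1 + s2 + s3 + s4 := hsq
      _ ≤ (2*Lf + 4*b + 2/α + (2 + α*Lf) * ‖A‖) * P + (4*a + 1/α + ‖A‖) * Q := by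
          have e : (2*Lf + 4*b + 2/α + (2 + α*Lf) * ‖A‖) * P + (4*a + 1/α + ‖A‖) * Q
              = ((1/α + 2*a)*Q + 2*b*P) + (‖A‖*Q + α*Lf*‖A‖*P) + 2*a*Q + 2*b*P
                + 2*(Lf*P) + 2*(1/α*P) + 2*(‖A‖*P) := by ring
          rw [e]
          linarith [hs1, hs2, n2, n4, k1, k2, k3]
end
end

section
/- If the PPDG sequence {(x^k, y^k)} is bounded, then the Lagrangian L is finite and takes a single constant value on the set C of cluster points of {(x^k, y^k)}; this constant equals the limit of the nonincreasing sequence 𝓛(z^k) = L(x^k,y^k) - a‖x^k - x^{k+1}‖² + b‖x^k - x^{k-1}‖². -/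
/-!
The `x`-update is a gradient step and the `y`-update a proximal step. The descent lemma for `f`,
the three-point inequality of the proximal step, and the `x`-update (which expresses
`α Aᵀ(y^{k+1} - y^k)` through consecutive steps and gradient differences) bound the increase of
`L` along the iteration by a quadratic form in three consecutive step lengths `‖x^k - x^{k+1}‖`.
The constants `a, b, c` are chosen so that `𝓛` absorbs this form with the margin
`c‖x^k - x^{k+1}‖² + c‖x^{k+1} - x^{k+2}‖²`. Boundedness of the iterates bounds `𝓛(z^k)` below,
so it converges and the steps vanish; hence `L(x^k, y^k)` has the same limit, and by continuity
of `L` this limit is the value of `L` at every cluster point.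
-/

open RealInnerProductSpace Filter

noncomputable section

/-- The Lyapunov function `𝓛(x,y,u,v) = L(x,y) - a‖x-u‖² + b‖x-v‖²` where
`L(x,y) = f(x) + ⟪y, Ax⟫ - h*(y)` is the Lagrangian. -/
def Lyap {X : Type*} [NormedAddCommGroup X] [InnerProductSpace ℝ X]
    {Y : Type*} [NormedAddCommGroup Y] [InnerProductSpace ℝ Y]
    (A : X →L[ℝ] Y) (f : X → ℝ) (hs : Y → ℝ) (a b : ℝ)
    (p : X) (q : Y) (u v : X) : ℝ :=
  (f p + ⟪q, A p⟫ - hs q) - a * ‖p - u‖^2 + b * ‖p - v‖^2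

open Topology Set
open scoped InnerProduct

theorem image_le_of_lipschitz_gradient {X : Type*} [NormedAddCommGroup X]
    [InnerProductSpace ℝ X] [CompleteSpace X] {f : X → ℝ} {f' : X → X}
    (hf : ∀ p, HasGradientAt f (f' p) p) {L : ℝ} (hL : ∀ p q, ‖f' p - f' q‖ ≤ L * ‖p - q‖)
    (p q : X) : f q ≤ f p + ⟪f' p, q - p⟫ + L / 2 * ‖q - p‖ ^ 2 := by
  set d := q - p
  let g : ℝ → ℝ := fun t => f (p + t • d) - t * ⟪f' p, d⟫ - L / 2 * t ^ 2 * ‖d‖ ^ 2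
  have hg : ∀ t, HasDerivAt g (⟪f' (p + t • d), d⟫ - ⟪f' p, d⟫ - L * t * ‖d‖ ^ 2) t := by
    intro t
    have hline : HasDerivAt (fun s : ℝ => p + s • d) d t := by
      simpa using ((hasDerivAt_id t).smul_const d).const_add p
    have hcomp := (hf (p + t • d)).hasFDerivAt.comp_hasDerivAt t hline
    refine ((hcomp.sub ((hasDerivAt_id t).mul_const ⟪f' p, d⟫)).sub
      (((hasDerivAt_pow 2 t).const_mul (L / 2)).mul_const (‖d‖ ^ 2))).congr_deriv ?_
    simp only [InnerProductSpace.toDual_apply_apply]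
    ring
  have hanti : AntitoneOn g (Icc 0 1) := by
    refine antitoneOn_of_hasDerivWithinAt_nonpos (convex_Icc 0 1)
      (fun t _ => (hg t).continuousAt.continuousWithinAt)
      (fun t _ => (hg t).hasDerivWithinAt) fun t ht => ?_
    rw [interior_Icc] at ht
    have hLip : ‖f' (p + t • d) - f' p‖ ≤ L * (t * ‖d‖) := by
      simpa [norm_smul, abs_of_pos ht.1] using hL (p + t • d) p
    have hCS := real_inner_le_norm (f' (p + t • d) - f' p) d
    rw [inner_sub_left] at hCS
    nlinarith [mul_le_mul_of_nonneg_right hLip (norm_nonneg d)]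
  have h01 : g 1 ≤ g 0 :=
    hanti (left_mem_Icc.2 zero_le_one) (right_mem_Icc.2 zero_le_one) zero_le_one
  have hg0 : g 0 = f p := by simp [g]
  have hg1 : g 1 = f q - ⟪f' p, d⟫ - L / 2 * ‖d‖ ^ 2 := by simp [g, d]
  linarith

theorem ConvexOn.le_add_inner_of_forall_le_add_sq {Y Z : Type*} [NormedAddCommGroup Y]
    [InnerProductSpace ℝ Y] [NormedAddCommGroup Z] [InnerProductSpace ℝ Z] {φ : Y → ℝ}
    (hφ : ConvexOn ℝ univ φ) (B : Y →L[ℝ] Z) (α : ℝ) {y₀ y₁ : Y}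
    (hmin : ∀ z, φ y₁ + α / 2 * ‖B (y₁ - y₀)‖ ^ 2 ≤ φ z + α / 2 * ‖B (z - y₀)‖ ^ 2) (w : Y) :
    φ y₁ ≤ φ w + α * ⟪B (y₁ - y₀), B (w - y₁)⟫ := by
  set K := φ w + α * ⟪B (y₁ - y₀), B (w - y₁)⟫
  set C := α / 2 * ‖B (w - y₁)‖ ^ 2
  -- compare `y₁` with the points of the segment towards `w`, then let them tend to `y₁`
  have hseg : ∀ t ∈ Ioo (0 : ℝ) 1, φ y₁ ≤ K + t * C := by
    rintro t ⟨ht₀, ht₁⟩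
    have hconv : φ ((1 - t) • y₁ + t • w) ≤ (1 - t) * φ y₁ + t * φ w :=
      hφ.2 (mem_univ _) (mem_univ _) (by linarith) ht₀.le (by ring)
    have hB : B ((1 - t) • y₁ + t • w - y₀) = B (y₁ - y₀) + t • B (w - y₁) := by
      rw [← map_smul, ← map_add]; congr 1; module
    have h := hmin ((1 - t) • y₁ + t • w)
    rw [hB, norm_add_sq_real, real_inner_smul_right, norm_smul, Real.norm_eq_abs, mul_pow,
      sq_abs] at h
    have : t * φ y₁ ≤ t * (K + t * C) := by simp only [K, C]; nlinarith
    exact le_of_mul_le_mul_left this ht₀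
  have hlim : Tendsto (fun t : ℝ => K + t * C) (𝓝 0) (𝓝 (K + 0 * C)) :=
    tendsto_const_nhds.add (tendsto_id.mul_const C)
  rw [zero_mul, add_zero] at hlim
  exact ge_of_tendsto (hlim.mono_left nhdsWithin_le_nhds)
    (mem_of_superset (Ioo_mem_nhdsGT one_pos) hseg)

theorem abs_inner_le_of_norm_le {X : Type*} [NormedAddCommGroup X] [InnerProductSpace ℝ X]
    {u v : X} {r : ℝ} (h : ‖u‖ ≤ r) : |⟪u, v⟫| ≤ r * ‖v‖ :=
  (abs_real_inner_le_norm u v).trans (mul_le_mul_of_nonneg_right h (norm_nonneg v))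

theorem exists_tendsto_of_le_sub_mul {S e : ℕ → ℝ} {c m : ℝ} (hc : 0 < c) (he : ∀ n, 0 ≤ e n)
    (hS : ∀ n, S (n+1) ≤ S n - c * e n) (hm : ∀ n, m ≤ S n) :
    ∃ l, Tendsto S atTop (𝓝 l) ∧ Tendsto e atTop (𝓝 0) := by
  have hanti : Antitone S := antitone_nat_of_succ_le fun n => by nlinarith [he n, hS n]
  have hlim := tendsto_atTop_ciInf hanti ⟨m, by rintro _ ⟨n, rfl⟩; exact hm n⟩
  refine ⟨_, hlim, squeeze_zero (g := fun n => (S n - S (n+1)) / c) he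
    (fun n => (le_div_iff₀ hc).2 ?_) ?_⟩
  · linarith [hS n]
  · simpa using (hlim.sub (hlim.comp (tendsto_add_atTop_nat 1))).div_const c

theorem exists_forall_le_comp_of_isBounded {Z : Type*} [PseudoMetricSpace Z] [ProperSpace Z]
    {g : Z → ℝ} (hg : Continuous g) {u : ℕ → Z} (hu : Bornology.IsBounded (range u)) :
    ∃ m, ∀ k, m ≤ g (u k) := by
  obtain ⟨m, hm⟩ := hu.isCompact_closure.bddBelow_image hg.continuousOn
  exact ⟨m, fun k => hm ⟨u k, subset_closure ⟨k, rfl⟩, rfl⟩⟩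

theorem MapClusterPt.eq_of_tendsto {Z ι : Type*} [TopologicalSpace Z] [T2Space Z] {F : Filter ι}
    {u : ι → Z} {z z' : Z} (hz : MapClusterPt z F u) (hu : Tendsto u F (𝓝 z')) : z = z' :=
  eq_of_nhds_neBot (hz.clusterPt.mono hu)

theorem ppdg_quadratic_form_le {α δ L a b c U V W : ℝ} (hα : 0 < α) (hδ : 0 < δ)
    (ha : a = δ / α)
    (hb : b = 1/(2*α) - L/4 - δ/α - α*δ*L^2/2 - δ*L + α*L^2/(4*δ))
    (hc : c = b - α*L^2/(2*δ)) :
    (L / 2 - 1 / α) * V ^ 2 + L * U * W + (L + α * L ^ 2) * (U * V)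
      ≤ a * W ^ 2 - (a + b + c) * V ^ 2 + (b - c) * U ^ 2 := by
  -- `a`, `b`, `c` are tuned so that the gap is exactly this sum of squares
  have hgap : a * W ^ 2 - (a + b + c) * V ^ 2 + (b - c) * U ^ 2
      - ((L / 2 - 1 / α) * V ^ 2 + L * U * W + (L + α * L ^ 2) * (U * V))
      = ((2*δ*W - α*L*U)^2 + (2*δ*(1 + α*L)*V - α*L*U)^2) / (4*δ*α) := by
    subst ha hb hc
    field_simp
    ring
  have : 0 ≤ ((2*δ*W - α*L*U)^2 + (2*δ*(1 + α*L)*V - α*L*U)^2) / (4*δ*α) := by positivity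
  linarith

def lagrangian {X Y : Type*} [NormedAddCommGroup X] [InnerProductSpace ℝ X]
    [NormedAddCommGroup Y] [InnerProductSpace ℝ Y]
    (A : X →L[ℝ] Y) (f : X → ℝ) (hs : Y → ℝ) (z : X × Y) : ℝ :=
  f z.1 + ⟪z.2, A z.1⟫ - hs z.2

theorem Lyap_eq_lagrangian {X Y : Type*} [NormedAddCommGroup X] [InnerProductSpace ℝ X]
    [NormedAddCommGroup Y] [InnerProductSpace ℝ Y]
    (A : X →L[ℝ] Y) (f : X → ℝ) (hs : Y → ℝ) (a b : ℝ) (p : X) (q : Y) (u v : X) :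
    Lyap A f hs a b p q u v = lagrangian A f hs (p, q) - a * ‖p - u‖ ^ 2 + b * ‖p - v‖ ^ 2 :=
  rfl

theorem continuous_lagrangian {X Y : Type*} [NormedAddCommGroup X] [InnerProductSpace ℝ X]
    [NormedAddCommGroup Y] [InnerProductSpace ℝ Y] (A : X →L[ℝ] Y) {f : X → ℝ} {hs : Y → ℝ}
    (hf : Continuous f) (hh : Continuous hs) : Continuous (lagrangian A f hs) := by
  unfold lagrangian
  fun_prop

theorem le_Lyap {X Y : Type*} [NormedAddCommGroup X] [InnerProductSpace ℝ X]
    [NormedAddCommGroup Y] [InnerProductSpace ℝ Y] {A : X →L[ℝ] Y} {f : X → ℝ} {hs : Y → ℝ}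
    {a b m r : ℝ} {p u v : X} {q : Y} (hm : m ≤ lagrangian A f hs (p, q))
    (hu : ‖p - u‖ ^ 2 ≤ r) (ha : 0 ≤ a) (hb : 0 ≤ b) : m - a * r ≤ Lyap A f hs a b p q u v := by
  rw [Lyap_eq_lagrangian]
  nlinarith [mul_le_mul_of_nonneg_left hu ha, mul_nonneg hb (sq_nonneg ‖p - v‖)]

theorem tendsto_lagrangian_of_tendsto_Lyap {X Y : Type*} [NormedAddCommGroup X]
    [InnerProductSpace ℝ X] [NormedAddCommGroup Y] [InnerProductSpace ℝ Y] {A : X →L[ℝ] Y}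
    {f : X → ℝ} {hs : Y → ℝ} {a b l : ℝ} {x : ℕ → X} {y : ℕ → Y}
    (hS : Tendsto (fun k => Lyap A f hs a b (x k) (y k) (x (k+1)) (x (k-1))) atTop (𝓝 l))
    (hd : Tendsto (fun k => ‖x k - x (k+1)‖ ^ 2) atTop (𝓝 0)) :
    Tendsto (fun k => lagrangian A f hs (x k, y k)) atTop (𝓝 l) := by
  have hd' : Tendsto (fun k => ‖x k - x (k-1)‖ ^ 2) atTop (𝓝 0) :=
    (tendsto_add_atTop_iff_nat 1).1 (by simpa only [add_tsub_cancel_right, norm_sub_rev] using hd)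
  have := (hS.add (hd.const_mul a)).sub (hd'.const_mul b)
  rw [mul_zero, mul_zero, add_zero, sub_zero] at this
  refine this.congr fun k => ?_
  rw [Lyap_eq_lagrangian]
  ring

section PPDG

variable {X Y : Type*} [NormedAddCommGroup X] [InnerProductSpace ℝ X] [CompleteSpace X]
  [NormedAddCommGroup Y] [InnerProductSpace ℝ Y] [CompleteSpace Y]
  {A : X →L[ℝ] Y} {f : X → ℝ} {f' : X → X} {hs : Y → ℝ} {α : ℝ} {x : ℕ → X} {y : ℕ → Y}

theorem ppdg_smul_adjoint_sub (hx : ∀ k, x (k+1) = x k - α • (f' (x k) + (A†) (y k))) (k : ℕ) :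
    α • (A†) (y (k+1) - y k)
      = (x (k+1) - x (k+2)) - (x k - x (k+1)) - α • (f' (x (k+1)) - f' (x k)) := by
  rw [hx (k+1), hx k]
  simp only [map_sub, smul_sub, smul_add]
  abel

theorem ppdg_le_of_lipschitz_gradient (hf : ∀ p, HasGradientAt f (f' p) p) {L : ℝ}
    (hL : ∀ p q, ‖f' p - f' q‖ ≤ L * ‖p - q‖) (hα : 0 < α)
    (hx : ∀ k, x (k+1) = x k - α • (f' (x k) + (A†) (y k))) (k : ℕ) :
    f (x (k+1)) ≤ f (x k) + (L / 2 - 1 / α) * ‖x k - x (k+1)‖ ^ 2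
      + ⟪y k, A (x k - x (k+1))⟫ := by
  have hgrad : f' (x k) = α⁻¹ • (x k - x (k+1)) - (A†) (y k) := by
    rw [hx k, sub_sub_cancel, smul_smul, inv_mul_cancel₀ hα.ne', one_smul, add_sub_cancel_right]
  have hdesc := image_le_of_lipschitz_gradient hf hL (x k) (x (k+1))
  rw [← neg_sub (x k), inner_neg_right, norm_neg, hgrad, inner_sub_left, real_inner_smul_left,
    real_inner_self_eq_norm_sq, ContinuousLinearMap.adjoint_inner_left] at hdesc
  rw [one_div]
  linarith

theorem ppdg_prox_le (hconv : ConvexOn ℝ univ hs)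
    (hy : ∀ k w, hs (y (k+1)) - ⟪y (k+1), A ((2:ℝ) • x (k+1) - x k)⟫
        + (1/2) * ⟪α • A ((A†) (y (k+1) - y k)), y (k+1) - y k⟫
      ≤ hs w - ⟪w, A ((2:ℝ) • x (k+1) - x k)⟫
        + (1/2) * ⟪α • A ((A†) (w - y k)), w - y k⟫) (k : ℕ) (w : Y) :
    hs (y (k+1)) - ⟪y (k+1), A ((2:ℝ) • x (k+1) - x k)⟫
      ≤ hs w - ⟪w, A ((2:ℝ) • x (k+1) - x k)⟫
        + α * ⟪(A†) (y (k+1) - y k), (A†) (w - y (k+1))⟫ := by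
  set v := A ((2:ℝ) • x (k+1) - x k)
  have hφ : ConvexOn ℝ univ fun z => hs z - ⟪z, v⟫ :=
    hconv.sub (((innerSL ℝ v).toLinearMap.concaveOn convex_univ).congr
      fun z _ => real_inner_comm z v)
  have hquad : ∀ e, ⟪α • A ((A†) e), e⟫ = α * ‖(A†) e‖ ^ 2 := fun e => by
    rw [real_inner_smul_left, ← ContinuousLinearMap.adjoint_inner_right,
      real_inner_self_eq_norm_sq]
  refine hφ.le_add_inner_of_forall_le_add_sq (A†) α (fun z => ?_) w
  have h := hy k z
  rw [hquad, hquad] at h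
  linarith

theorem ppdg_coupling_eq (hx : ∀ k, x (k+1) = x k - α • (f' (x k) + (A†) (y k))) (k : ℕ) :
    ⟪(A†) (y (k+2) - y (k+1)), (x k - x (k+1)) - (x (k+1) - x (k+2))⟫
        + α * ⟪(A†) (y (k+1) - y k), (A†) (y (k+2) - y (k+1))⟫
      = -⟪f' (x (k+1)) - f' (x k), x (k+2) - x (k+3)⟫
        + ⟪f' (x (k+1)) - f' (x k), x (k+1) - x (k+2)⟫
        + α * ⟪f' (x (k+1)) - f' (x k), f' (x (k+2)) - f' (x (k+1))⟫ := by
  set Δ := (A†) (y (k+2) - y (k+1))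
  set g := f' (x (k+1)) - f' (x k)
  calc _ = ⟪Δ, (x k - x (k+1)) - (x (k+1) - x (k+2)) + α • (A†) (y (k+1) - y k)⟫ := by
        rw [inner_add_right, real_inner_smul_right, real_inner_comm Δ]
    _ = ⟪Δ, -(α • g)⟫ := by rw [ppdg_smul_adjoint_sub hx k]; congr 1; abel
    _ = -⟪g, α • Δ⟫ := by
        rw [inner_neg_right, real_inner_smul_right, real_inner_smul_right, real_inner_comm]
    _ = _ := by
        rw [ppdg_smul_adjoint_sub hx (k+1)]
        simp only [inner_sub_right, real_inner_smul_right]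
        ring

theorem ppdg_lagrangian_sub_le (hf : ∀ p, HasGradientAt f (f' p) p) {L : ℝ} (hL₀ : 0 ≤ L)
    (hL : ∀ p q, ‖f' p - f' q‖ ≤ L * ‖p - q‖) (hconv : ConvexOn ℝ univ hs) (hα : 0 < α)
    (hx : ∀ k, x (k+1) = x k - α • (f' (x k) + (A†) (y k)))
    (hy : ∀ k w, hs (y (k+1)) - ⟪y (k+1), A ((2:ℝ) • x (k+1) - x k)⟫
        + (1/2) * ⟪α • A ((A†) (y (k+1) - y k)), y (k+1) - y k⟫
      ≤ hs w - ⟪w, A ((2:ℝ) • x (k+1) - x k)⟫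
        + (1/2) * ⟪α • A ((A†) (w - y k)), w - y k⟫) (k : ℕ) :
    lagrangian A f hs (x (k+2), y (k+2)) - lagrangian A f hs (x (k+1), y (k+1))
      ≤ (L / 2 - 1 / α) * ‖x (k+1) - x (k+2)‖ ^ 2
        + L * ‖x k - x (k+1)‖ * ‖x (k+2) - x (k+3)‖
        + (L + α * L ^ 2) * (‖x k - x (k+1)‖ * ‖x (k+1) - x (k+2)‖) := by
  have hdesc := ppdg_le_of_lipschitz_gradient hf hL hα hx (k+1)
  have hprox := ppdg_prox_le hconv hy k (y (k+2))
  have hcoup := ppdg_coupling_eq hx k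
  have hbilin : ⟪y (k+1), A (x (k+1) - x (k+2))⟫ + ⟪y (k+2), A (x (k+2))⟫
      - ⟪y (k+1), A (x (k+1))⟫ - ⟪y (k+2), A ((2:ℝ) • x (k+1) - x k)⟫
      + ⟪y (k+1), A ((2:ℝ) • x (k+1) - x k)⟫
      = ⟪(A†) (y (k+2) - y (k+1)), (x k - x (k+1)) - (x (k+1) - x (k+2))⟫ := by
    rw [ContinuousLinearMap.adjoint_inner_left]
    simp only [map_sub, map_smul, inner_sub_left, inner_sub_right, real_inner_smul_right]
    ring
  have hgrad : ∀ j, ‖f' (x (j+1)) - f' (x j)‖ ≤ L * ‖x j - x (j+1)‖ := fun j => by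
    rw [norm_sub_rev (x j)]
    exact hL _ _
  have h₁ := abs_le.mp (abs_inner_le_of_norm_le (v := x (k+2) - x (k+3)) (hgrad k))
  have h₂ := abs_le.mp (abs_inner_le_of_norm_le (v := x (k+1) - x (k+2)) (hgrad k))
  have h₃ : α * ⟪f' (x (k+1)) - f' (x k), f' (x (k+2)) - f' (x (k+1))⟫
      ≤ α * (L * ‖x k - x (k+1)‖ * (L * ‖x (k+1) - x (k+2)‖)) :=
    mul_le_mul_of_nonneg_left ((le_abs_self _).trans ((abs_inner_le_of_norm_le (hgrad k)).trans
      (mul_le_mul_of_nonneg_left (hgrad (k+1)) (by positivity)))) hα.le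
  unfold lagrangian
  linarith

theorem ppdg_lyap_le (hf : ∀ p, HasGradientAt f (f' p) p) {L : ℝ} (hL₀ : 0 ≤ L)
    (hL : ∀ p q, ‖f' p - f' q‖ ≤ L * ‖p - q‖) (hconv : ConvexOn ℝ univ hs) (hα : 0 < α)
    (hx : ∀ k, x (k+1) = x k - α • (f' (x k) + (A†) (y k)))
    (hy : ∀ k w, hs (y (k+1)) - ⟪y (k+1), A ((2:ℝ) • x (k+1) - x k)⟫
        + (1/2) * ⟪α • A ((A†) (y (k+1) - y k)), y (k+1) - y k⟫
      ≤ hs w - ⟪w, A ((2:ℝ) • x (k+1) - x k)⟫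
        + (1/2) * ⟪α • A ((A†) (w - y k)), w - y k⟫)
    {δ a b c : ℝ} (hδ : 0 < δ) (ha : a = δ / α)
    (hb : b = 1/(2*α) - L/4 - δ/α - α*δ*L^2/2 - δ*L + α*L^2/(4*δ))
    (hc : c = b - α*L^2/(2*δ)) (k : ℕ) :
    Lyap A f hs a b (x (k+2)) (y (k+2)) (x (k+3)) (x (k+1))
      ≤ Lyap A f hs a b (x (k+1)) (y (k+1)) (x (k+2)) (x k)
        - c * ‖x (k+1) - x (k+2)‖ ^ 2 - c * ‖x k - x (k+1)‖ ^ 2 := by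
  have hstep := ppdg_lagrangian_sub_le hf hL₀ hL hconv hα hx hy k
  have hquad := ppdg_quadratic_form_le (U := ‖x k - x (k+1)‖) (V := ‖x (k+1) - x (k+2)‖)
    (W := ‖x (k+2) - x (k+3)‖) hα hδ ha hb hc
  rw [Lyap_eq_lagrangian, Lyap_eq_lagrangian, norm_sub_rev (x (k+2)) (x (k+1)),
    norm_sub_rev (x (k+1)) (x k)]
  linarith

end PPDG

theorem stmt6_general
    {X : Type*} [NormedAddCommGroup X] [InnerProductSpace ℝ X] [FiniteDimensional ℝ X]
    {Y : Type*} [NormedAddCommGroup Y] [InnerProductSpace ℝ Y] [FiniteDimensional ℝ Y]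
    (A : X →L[ℝ] Y)
    (f : X → ℝ) (f' : X → X) (hf : ∀ p, HasGradientAt f (f' p) p)
    (Lf : ℝ) (hLf : 0 < Lf) (hLip : ∀ p q, ‖f' p - f' q‖ ≤ Lf * ‖p - q‖)
    (hs : Y → ℝ) (hconv : ConvexOn ℝ Set.univ hs)
    (α : ℝ) (hα : 0 < α)
    (x : ℕ → X) (y : ℕ → Y)
    (hxiter : ∀ k : ℕ,
      x (k+1) = x k - α • (f' (x k) + (ContinuousLinearMap.adjoint A) (y k)))
    (hyiter : ∀ k : ℕ, ∀ w : Y,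
      hs (y (k+1)) - ⟪y (k+1), A ((2:ℝ) • x (k+1) - x k)⟫
        + (1/2) * ⟪α • A ((ContinuousLinearMap.adjoint A) (y (k+1) - y k)), y (k+1) - y k⟫
      ≤ hs w - ⟪w, A ((2:ℝ) • x (k+1) - x k)⟫
        + (1/2) * ⟪α • A ((ContinuousLinearMap.adjoint A) (w - y k)), w - y k⟫)
    (δ a b c : ℝ) (hδ : 0 < δ)
    (hadef : a = δ / α)
    (hbdef : b = 1/(2*α) - Lf/4 - δ/α - α*δ*Lf^2/2 - δ*Lf + α*Lf^2/(4*δ))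
    (hcdef : c = b - α*Lf^2/(2*δ))
    (hapos : 0 < a) (hbpos : 0 < b) (hcpos : 0 < c)
    (hbound : ∃ R : ℝ, ∀ k : ℕ, ‖x k‖ ≤ R ∧ ‖y k‖ ≤ R) :
    (∀ k : ℕ, 1 ≤ k →
      Lyap A f hs a b (x (k+1)) (y (k+1)) (x (k+2)) (x k)
        ≤ Lyap A f hs a b (x k) (y k) (x (k+1)) (x (k-1)))
    ∧ ∃ c0 : ℝ,
        (∀ p ∈ {p : X × Y | MapClusterPt p atTop (fun k : ℕ => (x k, y k))},
          f p.1 + ⟪p.2, A p.1⟫ - hs p.2 = c0)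
        ∧ Tendsto (fun k : ℕ => Lyap A f hs a b (x k) (y k) (x (k+1)) (x (k-1)))
            atTop (nhds c0) := by
  set S : ℕ → ℝ := fun k => Lyap A f hs a b (x k) (y k) (x (k+1)) (x (k-1))
  have hdec : ∀ n, S (n+2) ≤ S (n+1) - c * ‖x (n+1) - x (n+2)‖ ^ 2 - c * ‖x n - x (n+1)‖ ^ 2 :=
    ppdg_lyap_le hf hLf.le hLip hconv hα hxiter hyiter hδ hadef hbdef hcdef
  refine ⟨fun k hk => ?_, ?_⟩
  · obtain ⟨j, rfl⟩ := Nat.exists_eq_add_of_le' hk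
    show S (j+2) ≤ S (j+1)
    nlinarith [hdec j]
  have hcont := continuous_lagrangian A
    (continuous_iff_continuousAt.2 fun p => (hf p).differentiableAt.continuousAt)
    (continuousOn_univ.1 (hconv.continuousOn isOpen_univ))
  obtain ⟨R, hR⟩ := hbound
  obtain ⟨m, hm⟩ := exists_forall_le_comp_of_isBounded hcont (u := fun k => (x k, y k))
    (isBounded_iff_forall_norm_le.2 ⟨R, by rintro _ ⟨k, rfl⟩; exact norm_prod_le_iff.2 (hR k)⟩)
  have hstep : ∀ j k, ‖x j - x k‖ ^ 2 ≤ (2 * R) ^ 2 := fun j k =>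
    pow_le_pow_left₀ (norm_nonneg _) ((norm_sub_le _ _).trans (by linarith [(hR j).1, (hR k).1])) 2
  obtain ⟨c0, hS, hd⟩ := exists_tendsto_of_le_sub_mul (S := fun n => S (n+1))
    (e := fun n => ‖x n - x (n+1)‖ ^ 2) hcpos (fun n => by positivity)
    (fun n => by nlinarith [hdec n])
    (fun n => le_Lyap (hm (n+1)) (hstep (n+1) (n+2)) hapos.le hbpos.le)
  rw [tendsto_add_atTop_iff_nat 1] at hS
  exact ⟨c0, fun p hp => (hp.continuousAt_comp hcont.continuousAt).eq_of_tendsto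
    (tendsto_lagrangian_of_tendsto_Lyap hS hd), hS⟩

/-- if the PPDG sequence is bounded, the Lagrangian is constant on the set of
cluster points, with constant value the limit of the nonincreasing sequence `𝓛(z^k)`. -/
theorem stmt6
    {X : Type*} [NormedAddCommGroup X] [InnerProductSpace ℝ X] [FiniteDimensional ℝ X]
    {Y : Type*} [NormedAddCommGroup Y] [InnerProductSpace ℝ Y] [FiniteDimensional ℝ Y]
    (A : X →L[ℝ] Y) (hA : Function.Surjective A)
    (f : X → ℝ) (f' : X → X) (hf : ∀ p, HasGradientAt f (f' p) p)
    (Lf : ℝ) (hLf : 0 < Lf) (hLip : ∀ p q, ‖f' p - f' q‖ ≤ Lf * ‖p - q‖)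
    (hs : Y → ℝ) (hconv : ConvexOn ℝ Set.univ hs)
    (hbdd : ∀ w : Y, BddBelow (Set.range fun p : X => f p + ⟪w, A p⟫ - hs w))
    (α : ℝ) (hα : 0 < α)
    (x : ℕ → X) (y : ℕ → Y)
    (hxiter : ∀ k : ℕ,
      x (k+1) = x k - α • (f' (x k) + (ContinuousLinearMap.adjoint A) (y k)))
    (hyiter : ∀ k : ℕ, ∀ w : Y,
      hs (y (k+1)) - ⟪y (k+1), A ((2:ℝ) • x (k+1) - x k)⟫
        + (1/2) * ⟪α • A ((ContinuousLinearMap.adjoint A) (y (k+1) - y k)), y (k+1) - y k⟫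
      ≤ hs w - ⟪w, A ((2:ℝ) • x (k+1) - x k)⟫
        + (1/2) * ⟪α • A ((ContinuousLinearMap.adjoint A) (w - y k)), w - y k⟫)
    (δ a b c : ℝ) (hδ : 0 < δ)
    (hadef : a = δ / α)
    (hbdef : b = 1/(2*α) - Lf/4 - δ/α - α*δ*Lf^2/2 - δ*Lf + α*Lf^2/(4*δ))
    (hcdef : c = b - α*Lf^2/(2*δ))
    (hapos : 0 < a) (hbpos : 0 < b) (hcpos : 0 < c)
    (hbound : ∃ R : ℝ, ∀ k : ℕ, ‖x k‖ ≤ R ∧ ‖y k‖ ≤ R) :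
    (∀ k : ℕ, 1 ≤ k →
      Lyap A f hs a b (x (k+1)) (y (k+1)) (x (k+2)) (x k)
        ≤ Lyap A f hs a b (x k) (y k) (x (k+1)) (x (k-1)))
    ∧ ∃ c0 : ℝ,
        (∀ p ∈ {p : X × Y | MapClusterPt p atTop (fun k : ℕ => (x k, y k))},
          f p.1 + ⟪p.2, A p.1⟫ - hs p.2 = c0)
        ∧ Tendsto (fun k : ℕ => Lyap A f hs a b (x k) (y k) (x (k+1)) (x (k-1)))
            atTop (nhds c0) :=
  stmt6_general A f f' hf Lf hLf hLip hs hconv α hα x y hxiter hyiter δ a b c hδ hadef hbdef hcdef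
    hapos hbpos hcpos hbound
end
end

section
/- Let n ≥ 1, λ > 0 and c₁ < 0 < c₂. Define h : ℝⁿ → (-∞,+∞] by h(x) = λ·(number of nonzero entries of x) if c₁ ≤ x_i ≤ c₂ for all i, and h(x) = +∞ otherwise. Then the conjugate function h*(y) = sup_x (⟨y, x⟩ - h(x)) is given by h*(y) = ∑_{i=1}^n φ(y_i), where φ(t) = c₂ t - λ if t > λ/c₂, φ(t) = 0 if λ/c₁ < t ≤ λ/c₂, and φ(t) = c₁ t - λ if t ≤ λ/c₁. -/
open RealInnerProductSpace

noncomputable section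

-- The ℓ₀-type function `h(x) = λ‖x‖₀` on the box `{x : c₁ ≤ xᵢ ≤ c₂}`, `+∞` outside.
open Classical in
def ellZero (n : ℕ) (lam c₁ c₂ : ℝ) (x : EuclideanSpace ℝ (Fin n)) : EReal :=
  if ∀ i, c₁ ≤ x i ∧ x i ≤ c₂ then
    ((lam * (({i : Fin n | x i ≠ 0} : Set (Fin n)).ncard : ℝ) : ℝ) : EReal)
  else ⊤

/-- The claimed one-dimensional conjugate piece `φ`. -/
def ellZeroConjPiece (lam c₁ c₂ t : ℝ) : ℝ :=
  if lam / c₂ < t then c₂ * t - lam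
  else if lam / c₁ < t then 0
  else c₁ * t - lam

/-!
The function `h` is separable: on the box it is `∑ᵢ g(xᵢ)` with `g(s) = λ·[s ≠ 0]` on
`[c₁, c₂]`, so `h*(y) = ∑ᵢ g*(yᵢ)`. Since `s ↦ t s` is linear, the supremum of `t s - λ` over
`s ∈ [c₁, c₂]`, `s ≠ 0`, is attained at an endpoint, hence `g*(t) = max (t c₁ - λ, 0, t c₂ - λ)`,
and this maximum is `φ(t)`.
-/

section Piece

variable {lam c₁ c₂ : ℝ}

theorem ellZeroConjPiece_eq_max (hlam : 0 < lam) (hc₁ : c₁ < 0) (hc₂ : 0 < c₂) (t : ℝ) :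
    ellZeroConjPiece lam c₁ c₂ t = max (max (t * c₁ - lam) 0) (t * c₂ - lam) := by
  unfold ellZeroConjPiece
  split_ifs with h₂ h₁
  · have := (div_lt_iff₀ hc₂).mp h₂
    have ht : 0 < t := by nlinarith
    rw [max_eq_right (max_le (by nlinarith) (by linarith))]
    ring
  · have := (div_lt_iff_of_neg hc₁).mp h₁
    have := (le_div_iff₀ hc₂).mp (not_lt.mp h₂)
    rw [max_eq_left (le_max_of_le_right (by linarith)), max_eq_right (by linarith)]
  · have := (le_div_iff_of_neg hc₁).mp (not_lt.mp h₁)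
    have ht : t < 0 := by nlinarith
    rw [max_eq_left (le_max_of_le_left (by nlinarith)), max_eq_left (by linarith)]
    ring

theorem mul_sub_ite_le_ellZeroConjPiece (hlam : 0 < lam) (hc₁ : c₁ < 0) (hc₂ : 0 < c₂)
    (t : ℝ) {s : ℝ} (hs : s ∈ Set.Icc c₁ c₂) :
    t * s - (if s ≠ 0 then lam else 0) ≤ ellZeroConjPiece lam c₁ c₂ t := by
  rw [ellZeroConjPiece_eq_max hlam hc₁ hc₂]
  by_cases hs₀ : s = 0
  · simp [hs₀]
  rw [if_pos hs₀]
  rcases le_or_gt 0 t with ht_nonneg | ht_neg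
  · exact le_max_of_le_right (by nlinarith [hs.2])
  · exact le_max_of_le_left (le_max_of_le_left (by nlinarith [hs.1]))

theorem exists_mul_sub_ite_eq_ellZeroConjPiece (hlam : 0 < lam) (hc₁ : c₁ < 0) (hc₂ : 0 < c₂)
    (t : ℝ) :
    ∃ s ∈ Set.Icc c₁ c₂, t * s - (if s ≠ 0 then lam else 0) = ellZeroConjPiece lam c₁ c₂ t := by
  rw [ellZeroConjPiece_eq_max hlam hc₁ hc₂]
  rcases max_choice (max (t * c₁ - lam) 0) (t * c₂ - lam) with h | h <;> rw [h]
  · rcases max_choice (t * c₁ - lam) 0 with h' | h' <;> rw [h']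
    · exact ⟨c₁, ⟨le_rfl, by linarith⟩, by simp [hc₁.ne]⟩
    · exact ⟨0, ⟨hc₁.le, hc₂.le⟩, by simp⟩
  · exact ⟨c₂, ⟨by linarith, le_rfl⟩, by simp [hc₂.ne']⟩

end Piece

theorem mul_ncard_setOf_ne_zero {ι : Type*} [Fintype ι] (f : ι → ℝ) (lam : ℝ) :
    lam * ({i | f i ≠ 0} : Set ι).ncard = ∑ i, if f i ≠ 0 then lam else 0 := by
  rw [Finset.sum_ite, Finset.sum_const_zero, add_zero, Finset.sum_const, nsmul_eq_mul, mul_comm,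
    Set.ncard_eq_toFinset_card']
  simp

theorem inner_sub_ellZero_eq_sum {n : ℕ} {lam c₁ c₂ : ℝ}
    (y : EuclideanSpace ℝ (Fin n)) {x : EuclideanSpace ℝ (Fin n)}
    (hx : ∀ i, c₁ ≤ x i ∧ x i ≤ c₂) :
    ((⟪y, x⟫ : ℝ) : EReal) - ellZero n lam c₁ c₂ x
      = ((∑ i, (y i * x i - if x i ≠ 0 then lam else 0) : ℝ) : EReal) := by
  have hinner : ⟪y, x⟫ = ∑ i, y i * x i := by simp [PiLp.inner_apply, mul_comm]
  rw [ellZero, if_pos hx, ← EReal.coe_sub, mul_ncard_setOf_ne_zero, hinner,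
    Finset.sum_sub_distrib]

theorem stmt19_general (n : ℕ) (lam c₁ c₂ : ℝ) (hlam : 0 < lam)
    (hc₁ : c₁ < 0) (hc₂ : 0 < c₂) (y : EuclideanSpace ℝ (Fin n)) :
    (⨆ x : EuclideanSpace ℝ (Fin n),
        (((⟪y, x⟫ : ℝ) : EReal) - ellZero n lam c₁ c₂ x))
      = ((∑ i, ellZeroConjPiece lam c₁ c₂ (y i) : ℝ) : EReal) := by
  apply le_antisymm
  · refine iSup_le fun x => ?_
    by_cases hx : ∀ i, c₁ ≤ x i ∧ x i ≤ c₂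
    · rw [inner_sub_ellZero_eq_sum y hx, EReal.coe_le_coe_iff]
      exact Finset.sum_le_sum fun i _ =>
        mul_sub_ite_le_ellZeroConjPiece hlam hc₁ hc₂ (y i) (hx i)
    · rw [ellZero, if_neg hx, EReal.sub_top]
      exact bot_le
  · choose s hs hs_eq using fun i ↦
      exists_mul_sub_ite_eq_ellZeroConjPiece hlam hc₁ hc₂ (y i)
    refine le_iSup_of_le (WithLp.toLp 2 s) (le_of_eq ?_)
    rw [inner_sub_ellZero_eq_sum y hs]
    exact congrArg _ (Finset.sum_congr rfl fun i _ => (hs_eq i).symm)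

/-- the conjugate of the constrained ℓ₀ function is the sum of the explicit
one-dimensional pieces `φ(yᵢ)`. -/
theorem stmt19 (n : ℕ) (hn : 1 ≤ n) (lam c₁ c₂ : ℝ) (hlam : 0 < lam)
    (hc₁ : c₁ < 0) (hc₂ : 0 < c₂) (y : EuclideanSpace ℝ (Fin n)) :
    (⨆ x : EuclideanSpace ℝ (Fin n),
        (((⟪y, x⟫ : ℝ) : EReal) - ellZero n lam c₁ c₂ x))
      = ((∑ i, ellZeroConjPiece lam c₁ c₂ (y i) : ℝ) : EReal) :=
  stmt19_general n lam c₁ c₂ hlam hc₁ hc₂ y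
end
end
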